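/- For every n ≥ 2 and every integer t ≥ 0, the number of lecture hall partitions λ ∈ ℤ^n with λ_n − λ_{n−1} = t equals Σ_{π ∈ S_{n−1}} C(t − des(π) + n − 1, n − 1), where the binomial coefficient is taken to be 0 when t < des(π). (This is the statement that the generating function Σ_λ z^{λ_n − λ_{n−1}}, summed over lecture hall partitions in ℤ^n, equals A_{n−1}(z)/(1−z)^n, where A_{n−1} is the (n−1)st Eulerian polynomial.) -/
import Mathlib


/-- A lecture hall partition of length `n`: a vector `λ ∈ ℤⁿ` (indexed `0,…,n-1`,
corresponding to `λ_1,…,λ_n`) with `0 ≤ λ_1` and `i·λ_{i+1} ≥ (i+1)·λ_i` for `1 ≤ i ≤ n-1`. -/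
def IsLectureHall (n : ℕ) (l : Fin n → ℤ) : Prop :=
  (∀ h : 0 < n, 0 ≤ l ⟨0, h⟩) ∧
  ∀ i : ℕ, ∀ h : i + 1 < n,
    ((i : ℤ) + 1) * l ⟨i + 1, h⟩ ≥ ((i : ℤ) + 2) * l ⟨i, by omega⟩

/-- The descent number of a permutation `π` of `{0,…,m-1}` (equivalently `{1,…,m}`):
the number of positions `i` with `π(i) > π(i+1)`. -/
noncomputable def descents {m : ℕ} (π : Equiv.Perm (Fin m)) : ℕ :=
  Nat.card {i : Fin m // ∃ h : (i : ℕ) + 1 < m, π ⟨(i : ℕ) + 1, h⟩ < π i}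

lemma lh_nonneg {n : ℕ} {l : Fin n → ℤ} (hl : IsLectureHall n l) :
    ∀ i : Fin n, 0 ≤ l i := by
  have key : ∀ k : ℕ, ∀ h : k < n, 0 ≤ l ⟨k, h⟩ := by
    intro k
    induction k with
    | zero => exact fun h => hl.1 h
    | succ k ih =>
      intro h
      have h2 := hl.2 k h
      have hk := ih (by omega)
      nlinarith [h2, hk]
  exact fun i => by simpa using key i.1 i.2

lemma lh_mono {n : ℕ} {l : Fin n → ℤ} (hl : IsLectureHall n l) :
    ∀ i j : Fin n, i ≤ j → l i ≤ l j := by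
  have step : ∀ k : ℕ, ∀ h : k + 1 < n, l ⟨k, by omega⟩ ≤ l ⟨k + 1, h⟩ := by
    intro k h
    have h2 := hl.2 k h
    have h0 : (0:ℤ) ≤ l ⟨k, by omega⟩ := lh_nonneg hl _
    nlinarith
  intro i j hij
  obtain ⟨i, hi⟩ := i; obtain ⟨j, hj⟩ := j
  simp only [Fin.mk_le_mk] at hij
  induction j with
  | zero => simp_all
  | succ j ih =>
    rcases Nat.lt_or_ge i (j+1) with hc | hc
    · exact le_trans (ih (by omega) (by omega)) (step j hj)
    · have : i = j + 1 := by omega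
      subst this; rfl

/-- lecture hall partitions of length m+1 with last part ≤ c -/
def LHle (m : ℕ) (c : ℤ) : Set (Fin (m+1) → ℤ) :=
  {l | IsLectureHall (m+1) l ∧ l (Fin.last m) ≤ c}

lemma LHle_finite (m : ℕ) (c : ℤ) : (LHle m c).Finite := by
  have hfin : (Set.univ.pi fun _ : Fin (m+1) => Set.Icc (0:ℤ) (max c 0)).Finite :=
    Set.Finite.pi (fun _ => Set.finite_Icc _ _)
  apply hfin.subset
  rintro l ⟨hl, hc⟩ i -
  exact ⟨lh_nonneg hl i, le_trans (lh_mono hl i (Fin.last m) (Fin.le_last i)) (le_trans hc (le_max_left _ _))⟩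

lemma LHle_empty {m : ℕ} {c : ℤ} (hc : c < 0) : LHle m c = ∅ := by
  ext l
  simp only [LHle, Set.mem_setOf_eq, Set.mem_empty_iff_false, iff_false, not_and]
  intro hl hle
  exact absurd (lh_nonneg hl (Fin.last m)) (by omega)

noncomputable def Fcnt (m : ℕ) (c : ℤ) : ℕ := (LHle m c).ncard

lemma Fcnt_neg {m : ℕ} {c : ℤ} (hc : c < 0) : Fcnt m c = 0 := by
  rw [Fcnt, LHle_empty hc, Set.ncard_empty]

lemma Fcnt_zero_eq (c : ℤ) (hc : 0 ≤ c) : Fcnt 0 c = (c + 1).toNat := by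
  have himg : LHle 0 c = (fun x : ℤ => fun _ : Fin 1 => x) '' Set.Icc 0 c := by
    ext l
    constructor
    · rintro ⟨hl, hle⟩
      exact ⟨l (Fin.last 0), ⟨lh_nonneg hl _, hle⟩, by
        funext i; have : i = Fin.last 0 := Subsingleton.elim _ _; rw [this]⟩
    · rintro ⟨x, ⟨hx0, hxc⟩, rfl⟩
      exact ⟨⟨fun _ => hx0, fun i h => by omega⟩, hxc⟩
  rw [Fcnt, himg, Set.ncard_image_of_injective _ (fun a b h => congrFun h 0)]
  rw [← Finset.coe_Icc, Set.ncard_coe_finset, Int.card_Icc]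
  omega

lemma lh_init {m : ℕ} {l : Fin (m+2) → ℤ} (hl : IsLectureHall (m+2) l) :
    IsLectureHall (m+1) (Fin.init l) := by
  constructor
  · intro h
    have : Fin.init l ⟨0, h⟩ = l ⟨0, by omega⟩ := rfl
    rw [this]; exact hl.1 _
  · intro i h
    have e1 : Fin.init l ⟨i+1, h⟩ = l ⟨i+1, by omega⟩ := rfl
    have e2 : Fin.init l ⟨i, by omega⟩ = l ⟨i, by omega⟩ := rfl
    rw [e1, e2]; exact hl.2 i (by omega)

lemma lh_snoc {m : ℕ} {l' : Fin (m+1) → ℤ} (hl : IsLectureHall (m+1) l') (c : ℤ)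
    (hc : ((m:ℤ)+2) * l' (Fin.last m) ≤ ((m:ℤ)+1) * c) :
    IsLectureHall (m+2) (Fin.snoc l' c) := by
  constructor
  · intro h
    have : (⟨0, h⟩ : Fin (m+2)) = Fin.castSucc ⟨0, by omega⟩ := rfl
    rw [this, Fin.snoc_castSucc]; exact hl.1 _
  · intro i h
    rcases Nat.lt_or_ge (i+1) (m+1) with h' | h'
    · have e1 : (⟨i+1, h⟩ : Fin (m+2)) = Fin.castSucc ⟨i+1, h'⟩ := rfl
      have e2 : (⟨i, by omega⟩ : Fin (m+2)) = Fin.castSucc ⟨i, by omega⟩ := rfl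
      rw [e1, e2, Fin.snoc_castSucc, Fin.snoc_castSucc]
      exact hl.2 i h'
    · have him : i = m := by omega
      subst him
      have e1 : (⟨i+1, h⟩ : Fin (i+2)) = Fin.last (i+1) := rfl
      have e2 : (⟨i, by omega⟩ : Fin (i+2)) = Fin.castSucc (Fin.last i) := rfl
      rw [e1, e2, Fin.snoc_last, Fin.snoc_castSucc]
      exact hc

lemma ncard_LHeq (m : ℕ) (c : ℤ) :
    ({l : Fin (m+2) → ℤ | IsLectureHall (m+2) l ∧ l (Fin.last (m+1)) = c}).ncard
      = Fcnt m ((((m:ℤ)+1) * c) / ((m:ℤ)+2)) := by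
  have hpos : (0:ℤ) < (m:ℤ) + 2 := by positivity
  have hset : {l : Fin (m+2) → ℤ | IsLectureHall (m+2) l ∧ l (Fin.last (m+1)) = c}
      = (fun l' : Fin (m+1) → ℤ => Fin.snoc l' c) '' LHle m ((((m:ℤ)+1) * c) / ((m:ℤ)+2)) := by
    ext l
    constructor
    · rintro ⟨hl, hlast⟩
      refine ⟨Fin.init l, ⟨lh_init hl, ?_⟩, by rw [← hlast]; exact Fin.snoc_init_self l⟩
      have key := hl.2 m (by omega)
      have e1 : (⟨m+1, by omega⟩ : Fin (m+2)) = Fin.last (m+1) := rfl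
      rw [e1, hlast] at key
      have e2 : Fin.init l (Fin.last m) = l ⟨m, by omega⟩ := rfl
      rw [e2]
      rw [Int.le_ediv_iff_mul_le hpos]
      linarith
    · rintro ⟨l', ⟨hl', hle⟩, rfl⟩
      refine ⟨lh_snoc hl' c ?_, Fin.snoc_last _ _⟩
      rw [Int.le_ediv_iff_mul_le hpos] at hle
      linarith
  rw [hset, Set.ncard_image_of_injective _ ?hinj]
  · rfl
  case hinj =>
    intro a b hab
    have := congrArg Fin.init hab
    rwa [Fin.init_snoc, Fin.init_snoc] at this

lemma Fcnt_split (m : ℕ) (c : ℤ) :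
    Fcnt (m+1) c = Fcnt (m+1) (c-1) + Fcnt m ((((m:ℤ)+1) * c) / ((m:ℤ)+2)) := by
  rw [← ncard_LHeq]
  have hsplit : LHle (m+1) c = LHle (m+1) (c-1)
      ∪ {l : Fin (m+2) → ℤ | IsLectureHall (m+2) l ∧ l (Fin.last (m+1)) = c} := by
    ext l
    simp only [LHle, Set.mem_setOf_eq, Set.mem_union]
    constructor
    · rintro ⟨hl, hle⟩
      rcases lt_or_eq_of_le hle with h | h
      · exact Or.inl ⟨hl, by omega⟩
      · exact Or.inr ⟨hl, h⟩
    · rintro (⟨hl, hle⟩ | ⟨hl, heq⟩)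
      · exact ⟨hl, by omega⟩
      · exact ⟨hl, le_of_eq heq⟩
  rw [Fcnt, hsplit, Set.ncard_union_eq ?hd (LHle_finite _ _) ?hf]
  case hd =>
    rw [Set.disjoint_left]
    rintro l ⟨_, hle⟩ ⟨_, heq⟩
    omega
  case hf =>
    apply (LHle_finite (m+1) c).subset
    rintro l ⟨hl, heq⟩
    exact ⟨hl, le_of_eq heq⟩
  rfl

lemma Fcnt_formula : ∀ m c : ℕ,
    Fcnt m (c:ℤ) = (c/(m+1)+1)^(m+1 - c%(m+1)) * (c/(m+1)+2)^(c%(m+1)) := by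
  intro m
  induction m with
  | zero =>
    intro c
    rw [Fcnt_zero_eq _ (by positivity)]
    have h1 : ((c:ℤ)+1).toNat = c + 1 := by omega
    rw [h1]
    simp [Nat.mod_one]
  | succ m ihm =>
    intro c
    induction c with
    | zero =>
      rw [show ((0:ℕ):ℤ) = 0 from rfl, Fcnt_split m 0, Fcnt_neg (by norm_num),
        mul_zero, Int.zero_ediv, show (0:ℤ) = ((0:ℕ):ℤ) from rfl, ihm 0]
      simp
    | succ c ihc =>
      have hcast : (((c+1:ℕ)):ℤ) - 1 = (c:ℤ) := by push_cast; ring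
      have hargcast : (((m:ℤ)+1) * ((c+1:ℕ):ℤ)) / ((m:ℤ)+2) = (((m+1)*(c+1)/(m+2) : ℕ) : ℤ) := by
        rw [Int.natCast_div]
        push_cast
        norm_num
      rw [Fcnt_split m ((c+1:ℕ):ℤ), hcast, hargcast, ihc, ihm]
      obtain ⟨q, j, hdm, hj⟩ : ∃ q j, (m+2)*q + j = c+1 ∧ j < m+2 :=
        ⟨(c+1)/(m+2), (c+1)%(m+2), Nat.div_add_mod _ _, Nat.mod_lt _ (by omega)⟩
      have hqq : (c+1)/(m+1+1) = q := by
        rw [show m+1+1 = m+2 from rfl, ← hdm, Nat.mul_add_div (by omega), Nat.div_eq_of_lt hj]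
        omega
      have hjj : (c+1)%(m+1+1) = j := by
        rw [show m+1+1 = m+2 from rfl, ← hdm, Nat.mul_add_mod, Nat.mod_eq_of_lt hj]
      rw [hqq, hjj]
      rcases Nat.eq_zero_or_pos j with hj0 | hjpos
      · -- j = 0, q ≥ 1
        subst hj0
        have hq1 : 1 ≤ q := by
          rcases Nat.eq_zero_or_pos q with rfl | h
          · simp at hdm
          · exact h
        obtain ⟨q', rfl⟩ : ∃ q', q = q' + 1 := ⟨q - 1, by omega⟩
        have hexp : (m+2)*(q'+1) = (m+2)*q' + (m+2) := by ring
        have hc : c = (m+1) + (m+2)*q' := by omega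
        have hdiv : c/(m+1+1) = q' := by
          rw [show m+1+1 = m+2 from rfl, hc, Nat.add_mul_div_left _ _ (by omega),
            Nat.div_eq_of_lt (by omega)]
          omega
        have hmod : c%(m+1+1) = m+1 := by
          rw [show m+1+1 = m+2 from rfl, hc, Nat.add_mul_mod_self_left, Nat.mod_eq_of_lt (by omega)]
        have harg : (m+1)*(c+1) = (m+2)*((m+1)*(q'+1)) := by
          have h5 : c + 1 = (m+2)*(q'+1) := by omega
          rw [h5]; ring
        have hdiv2 : (m+1)*(c+1)/(m+2) = (m+1)*(q'+1) := by
          rw [harg, Nat.mul_div_cancel_left _ (by omega)]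
        have hdiv3 : (m+1)*(q'+1)/(m+1) = q'+1 := Nat.mul_div_cancel_left _ (by omega)
        have hmod3 : (m+1)*(q'+1)%(m+1) = 0 := Nat.mul_mod_right _ _
        rw [hdiv, hmod, hdiv2, hdiv3, hmod3]
        simp only [Nat.sub_zero, pow_zero, mul_one]
        have e1 : m+1+1 - (m+1) = 1 := by omega
        rw [e1, pow_one, show m+1+1 = (m+1)+1 from rfl, pow_succ]
        ring
      · -- j = i+1
        obtain ⟨i, rfl⟩ : ∃ i, j = i + 1 := ⟨j - 1, by omega⟩
        have hi : i ≤ m := by omega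
        have hc : c = i + (m+2)*q := by omega
        have hdiv : c/(m+1+1) = q := by
          rw [show m+1+1 = m+2 from rfl, hc, Nat.add_mul_div_left _ _ (by omega),
            Nat.div_eq_of_lt (by omega)]
          omega
        have hmod : c%(m+1+1) = i := by
          rw [show m+1+1 = m+2 from rfl, hc, Nat.add_mul_mod_self_left, Nat.mod_eq_of_lt (by omega)]
        have harg : (m+1)*(c+1) = (m+1-i) + (m+2)*((m+1)*q + i) := by
          have h1 : c + 1 = (m+2)*q + (i+1) := by omega
          rw [h1]
          have h2 : (m+1)*(i+1) = (m+1-i) + (m+2)*i := by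
            have h3 : i ≤ m+1 := by omega
            zify [h3]
            ring
          calc (m+1)*((m+2)*q + (i+1)) = (m+2)*((m+1)*q) + (m+1)*(i+1) := by ring
            _ = (m+2)*((m+1)*q) + ((m+1-i) + (m+2)*i) := by rw [h2]
            _ = (m+1-i) + (m+2)*((m+1)*q + i) := by ring
        have hdiv2 : (m+1)*(c+1)/(m+2) = (m+1)*q + i := by
          rw [harg, Nat.add_mul_div_left _ _ (by omega), Nat.div_eq_of_lt (by omega)]
          omega
        have hdiv3 : ((m+1)*q+i)/(m+1) = q := by
          rw [show (m+1)*q+i = i + (m+1)*q from by ring, Nat.add_mul_div_left _ _ (by omega),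
            Nat.div_eq_of_lt (by omega)]
          omega
        have hmod3 : ((m+1)*q+i)%(m+1) = i := by
          rw [show (m+1)*q+i = i + (m+1)*q from by ring, Nat.add_mul_mod_self_left,
            Nat.mod_eq_of_lt (by omega)]
        rw [hdiv, hmod, hdiv2, hdiv3, hmod3]
        have e1 : m+1+1 - i = (m+1-i) + 1 := by omega
        have e2 : m+1+1 - (i+1) = m+1-i := by omega
        rw [e1, e2, pow_succ (q+1) (m+1-i), pow_succ (q+2) i]
        ring

lemma card_strictMono (k N : ℕ) :
    Nat.card {h : Fin k → Fin N // StrictMono h} = N.choose k := by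
  have e : {h : Fin k → Fin N // StrictMono h} ≃ {s : Finset (Fin N) // s.card = k} := by
    refine
      { toFun := fun h => ⟨Finset.univ.image h.1, by
          rw [Finset.card_image_of_injective _ h.2.injective, Finset.card_univ, Fintype.card_fin]⟩
        invFun := fun s => ⟨s.1.orderEmbOfFin s.2, (s.1.orderEmbOfFin s.2).strictMono⟩
        left_inv := ?_, right_inv := ?_ }
    · rintro ⟨h, hm⟩
      apply Subtype.ext
      exact (Finset.orderEmbOfFin_unique _ (fun x => Finset.mem_image_of_mem _ (Finset.mem_univ x)) hm).symm
    · rintro ⟨s, hs⟩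
      ext x
      simp only [Finset.mem_image, Finset.mem_univ, true_and]
      constructor
      · rintro ⟨i, rfl⟩; exact Finset.orderEmbOfFin_mem s hs i
      · intro hx
        have := Finset.range_orderEmbOfFin s hs
        have : x ∈ Set.range (s.orderEmbOfFin hs) := by rw [this]; exact hx
        obtain ⟨i, hi⟩ := this
        exact ⟨i, hi⟩
  rw [Nat.card_congr e, Nat.card_eq_fintype_card, Fintype.card_finset_len, Fintype.card_fin]

noncomputable def Dset {m : ℕ} (π : Equiv.Perm (Fin m)) : Finset (Fin m) :=
  @Finset.filter _ (fun i => ∃ h : (i:ℕ)+1 < m, π ⟨(i:ℕ)+1, h⟩ < π i)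
    (Classical.decPred _) Finset.univ

lemma mem_Dset {m : ℕ} {π : Equiv.Perm (Fin m)} {i : Fin m} :
    i ∈ Dset π ↔ ∃ h : (i:ℕ)+1 < m, π ⟨(i:ℕ)+1, h⟩ < π i := by
  simp [Dset]

lemma descents_eq {m : ℕ} (π : Equiv.Perm (Fin m)) : descents π = (Dset π).card := by
  classical
  rw [descents,
    Nat.card_congr (Equiv.subtypeEquivRight (fun i => (mem_Dset (π := π) (i := i)).symm)),
    Nat.card_eq_fintype_card, Fintype.card_coe]

lemma last_notMem_Dset {M : ℕ} (π : Equiv.Perm (Fin (M+1))) : Fin.last M ∉ Dset π := by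
  rw [mem_Dset]
  rintro ⟨h, -⟩
  simp [Fin.last] at h

lemma card_Dset_le {M : ℕ} (π : Equiv.Perm (Fin (M+1))) : (Dset π).card ≤ M := by
  have hsub : Dset π ⊆ Finset.univ.erase (Fin.last M) := by
    intro x hx
    exact Finset.mem_erase.2 ⟨fun hc => last_notMem_Dset π (hc ▸ hx), Finset.mem_univ x⟩
  calc (Dset π).card ≤ _ := Finset.card_le_card hsub
    _ = M := by rw [Finset.card_erase_of_mem (Finset.mem_univ _)]; simp

noncomputable def cD {M : ℕ} (π : Equiv.Perm (Fin (M+1))) (i : Fin (M+1)) : ℕ :=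
  (Finset.univ.filter (fun k => k < i ∧ k ∉ Dset π)).card

lemma cD_eq_last {M : ℕ} (π : Equiv.Perm (Fin (M+1))) :
    cD π (Fin.last M) = M - (Dset π).card := by
  classical
  have hset : (Finset.univ.filter (fun k => k < Fin.last M ∧ k ∉ Dset π))
      = ((Dset π)ᶜ).erase (Fin.last M) := by
    ext x
    simp only [Finset.mem_filter, Finset.mem_univ, true_and, Finset.mem_erase,
      Finset.mem_compl]
    constructor
    · rintro ⟨h1, h2⟩; exact ⟨Fin.ne_of_lt h1, h2⟩
    · rintro ⟨h1, h2⟩; exact ⟨lt_of_le_of_ne (Fin.le_last x) h1, h2⟩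
  rw [cD, hset, Finset.card_erase_of_mem (Finset.mem_compl.2 (last_notMem_Dset π)),
    Finset.card_compl]
  have := card_Dset_le π
  simp only [Fintype.card_fin]
  omega

lemma cD_le {M : ℕ} (π : Equiv.Perm (Fin (M+1))) (i : Fin (M+1)) :
    cD π i ≤ M - (Dset π).card := by
  rw [← cD_eq_last π, cD, cD]
  apply Finset.card_le_card
  intro x hx
  simp only [Finset.mem_filter, Finset.mem_univ, true_and] at hx ⊢
  exact ⟨lt_of_lt_of_le hx.1 (Fin.le_last i), hx.2⟩

lemma cD_le_self {M : ℕ} (π : Equiv.Perm (Fin (M+1))) (i : Fin (M+1)) :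
    cD π i ≤ (i : ℕ) := by
  classical
  calc cD π i ≤ (Finset.univ.filter (fun k => k < i)).card := by
        apply Finset.card_le_card; intro x hx
        simp only [Finset.mem_filter, Finset.mem_univ, true_and] at hx ⊢
        exact hx.1
    _ = (i : ℕ) := by
        have hiio : (Finset.univ.filter (fun k => k < i)) = Finset.Iio i := by
          ext x; simp
        rw [hiio, Fin.card_Iio]

lemma cD_succ {M : ℕ} (π : Equiv.Perm (Fin (M+1))) (k : ℕ) (hk : k + 1 < M + 1) :
    cD π ⟨k+1, hk⟩ = cD π ⟨k, by omega⟩ +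
      (if (⟨k, by omega⟩ : Fin (M+1)) ∈ Dset π then 0 else 1) := by
  classical
  by_cases hmem : (⟨k, by omega⟩ : Fin (M+1)) ∈ Dset π
  · rw [if_pos hmem, add_zero]
    have hset : (Finset.univ.filter (fun x => x < (⟨k+1, hk⟩ : Fin (M+1)) ∧ x ∉ Dset π))
        = (Finset.univ.filter (fun x => x < (⟨k, by omega⟩ : Fin (M+1)) ∧ x ∉ Dset π)) := by
      ext x
      obtain ⟨xv, hxv⟩ := x
      simp only [Finset.mem_filter, Finset.mem_univ, true_and, Fin.mk_lt_mk]
      constructor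
      · rintro ⟨h1, h2⟩
        refine ⟨?_, h2⟩
        rcases Nat.lt_or_ge xv k with h | h
        · exact h
        · exfalso; have hxk : xv = k := by omega
          apply h2; rwa [show (⟨xv,hxv⟩ : Fin (M+1)) = (⟨k, by omega⟩ : Fin (M+1)) from Fin.ext hxk]
      · rintro ⟨h1, h2⟩; exact ⟨by omega, h2⟩
    rw [cD, cD, hset]
  · rw [if_neg hmem]
    have hins : (Finset.univ.filter (fun x => x < (⟨k+1, hk⟩ : Fin (M+1)) ∧ x ∉ Dset π))
        = insert (⟨k, by omega⟩ : Fin (M+1))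
            (Finset.univ.filter (fun x => x < (⟨k, by omega⟩ : Fin (M+1)) ∧ x ∉ Dset π)) := by
      ext x
      obtain ⟨xv, hxv⟩ := x
      simp only [Finset.mem_filter, Finset.mem_univ, true_and, Finset.mem_insert, Fin.mk_lt_mk,
        Fin.mk.injEq]
      constructor
      · rintro ⟨h1, h2⟩
        rcases Nat.lt_or_ge xv k with h | h
        · exact Or.inr ⟨h, h2⟩
        · exact Or.inl (by omega)
      · rintro (rfl | ⟨h1, h2⟩)
        · exact ⟨by omega, hmem⟩
        · exact ⟨by omega, h2⟩
    rw [cD, cD, hins, Finset.card_insert_of_notMem]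
    simp

section chain
lemma fin_chain_lt {α : Type*} [Preorder α] {m : ℕ} (u : Fin m → α) :
    ∀ (jv : ℕ) (hj : jv < m) (i : Fin m), (i:ℕ) < jv →
    (∀ k : ℕ, ∀ hk : k+1 < m, (i:ℕ) ≤ k → k+1 ≤ jv → u ⟨k, by omega⟩ < u ⟨k+1, hk⟩) →
    u i < u ⟨jv, hj⟩ := by
  intro jv
  induction jv with
  | zero => omega
  | succ jv ih =>
    intro hj i hi hadj
    rcases Nat.lt_or_ge (i:ℕ) jv with h | h
    · exact lt_trans (ih (by omega) i h (fun k hk h1 h2 => hadj k hk h1 (by omega)))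
        (hadj jv hj (by omega) (by omega))
    · have hieq : i = ⟨jv, by omega⟩ := Fin.ext (show (i:ℕ) = jv by omega)
      rw [hieq]
      exact hadj jv hj (by omega) (by omega)

lemma fin_chain_le {m : ℕ} (v w : Fin m → ℕ)
    (hadj : ∀ k : ℕ, ∀ hk : k+1 < m,
      v ⟨k, by omega⟩ + w ⟨k+1, hk⟩ ≤ v ⟨k+1, hk⟩ + w ⟨k, by omega⟩) :
    ∀ (jv : ℕ) (hj : jv < m) (i : Fin m), (i:ℕ) ≤ jv →
      v i + w ⟨jv, hj⟩ ≤ v ⟨jv, hj⟩ + w i := by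
  intro jv
  induction jv with
  | zero =>
    intro hj i hi
    have : i = ⟨0, hj⟩ := Fin.ext (show (i:ℕ) = 0 by omega)
    rw [this]
  | succ jv ih =>
    intro hj i hi
    rcases Nat.lt_or_ge (i:ℕ) (jv+1) with h | h
    · have h1 := ih (by omega) i (by omega)
      have h2 := hadj jv hj
      omega
    · have : i = ⟨jv+1, hj⟩ := Fin.ext (show (i:ℕ) = jv+1 by omega)
      rw [this]

lemma strictMono_val_le {m N : ℕ} {h : Fin m → Fin N} (hs : StrictMono h) :
    ∀ (kv : ℕ) (hk : kv < m), kv ≤ (h ⟨kv, hk⟩ : ℕ) := by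
  intro kv
  induction kv with
  | zero => omega
  | succ kv ih =>
    intro hk
    have h1 := ih (by omega)
    have h2 : h ⟨kv, by omega⟩ < h ⟨kv+1, hk⟩ := hs (by rw [Fin.mk_lt_mk]; omega)
    rw [Fin.lt_def] at h2
    omega
end chain

/-- The middle condition: monotone and strictly increasing at descents of π -/
def Cond {M : ℕ} (π : Equiv.Perm (Fin (M+1))) (t : ℕ) (g : Fin (M+1) → Fin (t+1)) : Prop :=
  Monotone g ∧ ∀ k : ℕ, ∀ hk : k+1 < M+1,
    (⟨k, by omega⟩ : Fin (M+1)) ∈ Dset π → g ⟨k, by omega⟩ < g ⟨k+1, hk⟩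


lemma sub_bound {M t : ℕ} (π : Equiv.Perm (Fin (M+1)))
    (h : Fin (M+1) → Fin (t + (M - (Dset π).card) + 1)) (hs : StrictMono h) (i : Fin (M+1)) :
    (h i : ℕ) - cD π i ≤ t := by
  have key := fin_chain_le (fun x => (h x : ℕ)) (cD π) ?hadj M (by omega) i (by omega)
  case hadj =>
    intro k hk
    have hc := cD_succ π k hk
    have hh : h ⟨k, by omega⟩ < h ⟨k+1, hk⟩ := hs (by rw [Fin.mk_lt_mk]; omega)
    rw [Fin.lt_def] at hh
    beta_reduce
    split at hc <;> omega
  beta_reduce at key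
  have hlast : (⟨M, by omega⟩ : Fin (M+1)) = Fin.last M := rfl
  rw [hlast, cD_eq_last] at key
  have h2 := (h (Fin.last M)).is_le
  have h3 := card_Dset_le π
  omega

lemma card_cond (M t : ℕ) (π : Equiv.Perm (Fin (M+1))) :
    Nat.card {g : Fin (M+1) → Fin (t+1) // Cond π t g}
      = (t + (M - (Dset π).card) + 1).choose (M+1) := by
  rw [← card_strictMono (M+1) (t + (M - (Dset π).card) + 1)]
  apply Nat.card_congr
  refine
    { toFun := fun g => ⟨fun i => ⟨(g.1 i : ℕ) + cD π i, by
        have h1 := cD_le π i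
        have h2 := (g.1 i).is_le
        omega⟩, ?_⟩
      invFun := fun h => ⟨fun i => ⟨(h.1 i : ℕ) - cD π i, Nat.lt_succ_of_le (sub_bound π h.1 h.2 i)⟩, ?_⟩
      left_inv := ?_, right_inv := ?_ }
  · -- toFun : StrictMono
    obtain ⟨g, hmono, hstr⟩ := g
    rw [Fin.strictMono_iff_lt_succ]
    intro i
    have e1 : Fin.castSucc i = (⟨(i:ℕ), by omega⟩ : Fin (M+1)) := rfl
    have e2 : i.succ = (⟨(i:ℕ)+1, by omega⟩ : Fin (M+1)) := rfl
    rw [e1, e2, Fin.lt_def]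
    simp only
    have hc := cD_succ π (i:ℕ) (by omega)
    by_cases hmem : (⟨(i:ℕ), by omega⟩ : Fin (M+1)) ∈ Dset π
    · have := hstr (i:ℕ) (by omega) hmem
      rw [Fin.lt_def] at this
      rw [hc, if_pos hmem]
      omega
    · have hle : g ⟨(i:ℕ), by omega⟩ ≤ g ⟨(i:ℕ)+1, by omega⟩ := hmono (by rw [Fin.mk_le_mk]; omega)
      rw [Fin.le_def] at hle
      rw [hc, if_neg hmem]
      omega
  · -- invFun : Cond
    obtain ⟨h, hs⟩ := h
    constructor
    · rw [Fin.monotone_iff_le_succ]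
      intro i
      have e1 : Fin.castSucc i = (⟨(i:ℕ), by omega⟩ : Fin (M+1)) := rfl
      have e2 : i.succ = (⟨(i:ℕ)+1, by omega⟩ : Fin (M+1)) := rfl
      rw [e1, e2, Fin.le_def]
      simp only
      have hc := cD_succ π (i:ℕ) (by omega)
      have hh : h ⟨(i:ℕ), by omega⟩ < h ⟨(i:ℕ)+1, by omega⟩ := hs (by rw [Fin.mk_lt_mk]; omega)
      rw [Fin.lt_def] at hh
      have hcs : cD π ⟨(i:ℕ), by omega⟩ ≤ (i:ℕ) := cD_le_self π _
      have hval : (i:ℕ) ≤ (h ⟨(i:ℕ), by omega⟩ : ℕ) := strictMono_val_le hs (i:ℕ) (by omega)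
      split at hc <;> omega
    · intro k hk hmem
      rw [Fin.lt_def]
      simp only
      have hc := cD_succ π k hk
      rw [if_pos hmem] at hc
      have hh : h ⟨k, by omega⟩ < h ⟨k+1, hk⟩ := hs (by rw [Fin.mk_lt_mk]; omega)
      rw [Fin.lt_def] at hh
      have hcs : cD π ⟨k, by omega⟩ ≤ k := cD_le_self π _
      have hval : k ≤ (h ⟨k, by omega⟩ : ℕ) := strictMono_val_le hs k (by omega)
      omega
  · -- left_inv
    rintro ⟨g, hg⟩
    apply Subtype.ext
    funext i
    apply Fin.ext
    simp only
    omega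
  · -- right_inv
    rintro ⟨h, hs⟩
    apply Subtype.ext
    funext i
    apply Fin.ext
    simp only
    have hcs : cD π i ≤ (i:ℕ) := cD_le_self π i
    have hval : (i:ℕ) ≤ (h i : ℕ) := by
      have := strictMono_val_le hs (i:ℕ) i.2
      simpa using this
    omega

lemma sort_eq_iff_cond {M t : ℕ} (π : Equiv.Perm (Fin (M+1))) (f : Fin (M+1) → Fin (t+1)) :
    Tuple.sort f = π ↔ Cond π t (f ∘ π) := by
  rw [show (Tuple.sort f = π) ↔ (π = Tuple.sort f) from eq_comm, Tuple.eq_sort_iff]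
  constructor
  · rintro ⟨hmono, hpair⟩
    refine ⟨hmono, ?_⟩
    intro k hk hmem
    rw [mem_Dset] at hmem
    obtain ⟨h', hdesc⟩ := hmem
    have hle : (f ∘ π) ⟨k, by omega⟩ ≤ (f ∘ π) ⟨k+1, hk⟩ := hmono (by rw [Fin.mk_le_mk]; omega)
    rcases lt_or_eq_of_le hle with h | h
    · exact h
    · exfalso
      have := hpair ⟨k, by omega⟩ ⟨k+1, hk⟩ (by rw [Fin.mk_lt_mk]; omega) h
      exact absurd hdesc (not_lt.2 (le_of_lt this))
  · rintro ⟨hmono, hstr⟩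
    refine ⟨hmono, ?_⟩
    intro i j hij heq
    apply fin_chain_lt (fun x => π x) (j:ℕ) (by omega) i (by rwa [← Fin.lt_def]) ?_
    intro k hk h1 h2
    -- g is constant on [i, j]
    have hgk : (f ∘ π) ⟨k, by omega⟩ = (f ∘ π) ⟨k+1, hk⟩ := by
      have e1 : (f ∘ π) i ≤ (f ∘ π) ⟨k, by omega⟩ := hmono (by rw [Fin.le_def]; simpa using h1)
      have e2 : (f ∘ π) ⟨k, by omega⟩ ≤ (f ∘ π) ⟨k+1, hk⟩ := hmono (by rw [Fin.mk_le_mk]; omega)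
      have e3 : (f ∘ π) ⟨k+1, hk⟩ ≤ (f ∘ π) j := hmono (by rw [Fin.le_def]; simpa using h2)
      have e4 : (f ∘ π) i = (f ∘ π) j := heq
      exact le_antisymm e2 (by rw [← e4] at e3; exact le_trans e3 e1)
    have hnmem : (⟨k, by omega⟩ : Fin (M+1)) ∉ Dset π := by
      intro hmem
      exact absurd hgk (ne_of_lt (hstr k hk hmem))
    rw [mem_Dset] at hnmem
    have hnlt : ¬ (π ⟨k+1, hk⟩ < π ⟨k, by omega⟩) := fun hlt => hnmem ⟨hk, hlt⟩
    have hne : π ⟨k, by omega⟩ ≠ π ⟨k+1, hk⟩ := by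
      intro hc
      have : (⟨k, by omega⟩ : Fin (M+1)) = ⟨k+1, hk⟩ := π.injective hc
      rw [Fin.mk.injEq] at this
      omega
    exact lt_of_le_of_ne (not_lt.1 hnlt) hne

lemma card_fiber (M t : ℕ) (π : Equiv.Perm (Fin (M+1))) :
    Nat.card {f : Fin (M+1) → Fin (t+1) // Tuple.sort f = π}
      = (t + (M - descents π) + 1).choose (M+1) := by
  rw [descents_eq, ← card_cond M t π]
  apply Nat.card_congr
  refine
    { toFun := fun f => ⟨f.1 ∘ π, (sort_eq_iff_cond π f.1).1 f.2⟩
      invFun := fun g => ⟨g.1 ∘ π.symm, ?_⟩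
      left_inv := fun f => by
        apply Subtype.ext; funext i; simp
      right_inv := fun g => by
        apply Subtype.ext; funext i; simp }
  rw [sort_eq_iff_cond]
  have : (g.1 ∘ π.symm) ∘ π = g.1 := by funext x; simp
  rw [this]
  exact g.2

lemma worpitzky (M t : ℕ) :
    (t+1)^(M+1) = ∑ π : Equiv.Perm (Fin (M+1)), (t + (M - descents π) + 1).choose (M+1) := by
  classical
  have h1 : (t+1)^(M+1) = Nat.card (Fin (M+1) → Fin (t+1)) := by
    simp [Nat.card_eq_fintype_card]
  rw [h1, ← Nat.card_congr (Equiv.sigmaFiberEquiv (fun f : Fin (M+1) → Fin (t+1) => Tuple.sort f)),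
    Nat.card_eq_fintype_card, Fintype.card_sigma]
  apply Finset.sum_congr rfl
  intro π _
  rw [← Nat.card_eq_fintype_card, card_fiber]

lemma ncard_diff (m t : ℕ) (him : m < m + 2) :
    Nat.card {l : Fin (m+2) → ℤ //
        IsLectureHall (m+2) l ∧ l (Fin.last (m+1)) - l ⟨m, him⟩ = (t:ℤ)}
      = Fcnt m (((m+1)*t : ℕ) : ℤ) := by
  have hcoe : Nat.card {l : Fin (m+2) → ℤ //
        IsLectureHall (m+2) l ∧ l (Fin.last (m+1)) - l ⟨m, him⟩ = (t:ℤ)}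
      = ({l : Fin (m+2) → ℤ |
        IsLectureHall (m+2) l ∧ l (Fin.last (m+1)) - l ⟨m, him⟩ = (t:ℤ)}).ncard :=
    Nat.card_coe_set_eq _
  rw [hcoe, Fcnt]
  clear hcoe
  have hset : {l : Fin (m+2) → ℤ |
        IsLectureHall (m+2) l ∧ l (Fin.last (m+1)) - l ⟨m, him⟩ = (t:ℤ)}
      = (fun l' : Fin (m+1) → ℤ => (Fin.snoc l' (l' (Fin.last m) + (t:ℤ)) : Fin (m+2) → ℤ)) ''
          LHle m (((m+1)*t : ℕ) : ℤ) := by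
    ext l
    constructor
    · rintro ⟨hl, hdiff⟩
      have key := hl.2 m (by omega)
      have e1 : (⟨m+1, by omega⟩ : Fin (m+2)) = Fin.last (m+1) := rfl
      rw [e1] at key
      have e2 : Fin.init l (Fin.last m) = l ⟨m, him⟩ := rfl
      refine ⟨Fin.init l, ⟨lh_init hl, ?_⟩, ?_⟩
      · rw [e2]
        push_cast
        nlinarith [key, hdiff]
      · show (Fin.snoc (Fin.init l) (Fin.init l (Fin.last m) + (t:ℤ)) : Fin (m+2) → ℤ) = l
        rw [e2, show l ⟨m, him⟩ + (t:ℤ) = l (Fin.last (m+1)) by omega]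
        exact Fin.snoc_init_self l
    · rintro ⟨l', ⟨hl', hle⟩, rfl⟩
      have hlh : IsLectureHall (m+2) (Fin.snoc l' (l' (Fin.last m) + (t:ℤ))) := by
        apply lh_snoc hl'
        push_cast at hle ⊢
        nlinarith [hle]
      refine ⟨hlh, ?_⟩
      show (Fin.snoc l' (l' (Fin.last m) + (t:ℤ)) : Fin (m+2) → ℤ) (Fin.last (m+1))
        - (Fin.snoc l' (l' (Fin.last m) + (t:ℤ)) : Fin (m+2) → ℤ) ⟨m, him⟩ = (t:ℤ)
      rw [Fin.snoc_last]
      have e3 : (⟨m, him⟩ : Fin (m+2)) = Fin.castSucc (Fin.last m) := rfl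
      rw [e3, Fin.snoc_castSucc]
      ring
  rw [hset, Set.ncard_image_of_injective _ ?hinj]
  case hinj =>
    intro a b hab
    have h1 := congrArg Fin.init hab
    rw [Fin.init_snoc, Fin.init_snoc] at h1
    exact h1

/-- For `n ≥ 2` and `t ≥ 0`, the number of lecture hall partitions `λ ∈ ℤⁿ` with
`λ_n - λ_{n-1} = t` equals `Σ_{π ∈ S_{n-1}} C(t - des(π) + n - 1, n - 1)`, where the
binomial coefficient is taken to be `0` when `t < des(π)`. -/
theorem lectureHall_degree_t_count_eulerian (n t : ℕ) (hn : 2 ≤ n) :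
    Nat.card {l : Fin n → ℤ //
      IsLectureHall n l ∧ l ⟨n - 1, by omega⟩ - l ⟨n - 2, by omega⟩ = (t : ℤ)} =
    ∑ π : Equiv.Perm (Fin (n - 1)),
      if descents π ≤ t then (t - descents π + n - 1).choose (n - 1) else 0 := by
  obtain ⟨m, rfl⟩ : ∃ m, n = m + 2 := ⟨n - 2, by omega⟩
  have him : m < m + 2 := by omega
  have main : Nat.card {l : Fin (m+2) → ℤ //
      IsLectureHall (m+2) l ∧ l (Fin.last (m+1)) - l ⟨m, him⟩ = (t : ℤ)}
      = ∑ π : Equiv.Perm (Fin (m+1)),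
        (if descents π ≤ t then ((t - descents π) + (m+1)).choose (m+1) else 0) := by
    rw [ncard_diff m t him, Fcnt_formula]
    have h1 : (m+1)*t/(m+1) = t := Nat.mul_div_cancel_left _ (by omega)
    have h2 : (m+1)*t%(m+1) = 0 := Nat.mul_mod_right _ _
    rw [h1, h2]
    simp only [Nat.sub_zero, pow_zero, mul_one]
    rw [worpitzky m t]
    apply Finset.sum_congr rfl
    intro π _
    have hd : descents π ≤ m := by rw [descents_eq]; exact card_Dset_le π
    by_cases hdt : descents π ≤ t
    · rw [if_pos hdt]
      congr 1
      omega
    · rw [if_neg hdt]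
      apply Nat.choose_eq_zero_of_lt
      omega
  exact main
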